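/- arXiv:1609.07199 — 3 statements merged into one kernel-verified Lean document; each statement's English description precedes it below -/
import Mathlib

section
/- Let θ be a CPWL function and consider the composite optimization setting. Suppose Λ_com(x̄) ≠ ∅ and v̄ ∈ Λ_com(x̄) satisfies the second-order sufficient condition: ⟨∇²ₓₓL(x̄,v̄)u, u⟩ > 0 for every u ≠ 0 with ∇Φ(x̄)u ∈ 𝒦(z̄,v̄). Then x̄ is a strict local minimizer of φ := φ₀ + θ∘Φ, i.e., there is a neighborhood of x̄ on which φ₀(x̄) + θ(Φ(x̄)) < φ₀(x) + θ(Φ(x)) for all x ≠ x̄. -/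
open Filter Topology Set RealInnerProductSpace

noncomputable section

abbrev Ev (k : ℕ) := EuclideanSpace ℝ (Fin k)

/-- The Bouligand–Severi tangent cone to a set `s` at `x`. -/
def tcone {E : Type*} [NormedAddCommGroup E] [NormedSpace ℝ E] (s : Set E) (x : E) : Set E :=
  {w | ∃ (z : ℕ → E) (c : ℕ → ℝ), (∀ k, z k ∈ s) ∧ (∀ k, 0 ≤ c k) ∧
      Tendsto z atTop (𝓝 x) ∧ Tendsto (fun k => c k • (z k - x)) atTop (𝓝 w)}

/-- The data of a convex piecewise linear (CPWL) extended-real-valued function on `ℝ^m`: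
`θ(z) = max_i (⟨a i, z⟩ - al i)` on the polyhedron `dom θ = {z | ⟨d i, z⟩ ≤ be i ∀ i}`,
and `θ(z) = +∞` outside of it. -/
structure CPWL (m : ℕ) where
  l : ℕ
  p : ℕ
  hl : 0 < l
  a : Fin l → Ev m
  al : Fin l → ℝ
  d : Fin p → Ev m
  be : Fin p → ℝ
  dom_nonempty : ∃ z : Ev m, ∀ i, ⟪d i, z⟫ ≤ be i

namespace CPWL

variable {m : ℕ} (θ : CPWL m)

/-- The (polyhedral) domain of the CPWL function. -/
def dom : Set (Ev m) := {z | ∀ i, ⟪θ.d i, z⟫ ≤ θ.be i}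

/-- The real value `max_i (⟨a i, z⟩ - al i)` of the CPWL function (meaningful on its domain). -/
def val (z : Ev m) : ℝ := ⨆ i : Fin θ.l, (⟪θ.a i, z⟫ - θ.al i)

/-- The CPWL function as an extended-real-valued function. -/
def eval (z : Ev m) : EReal :=
  @ite _ (z ∈ θ.dom) (Classical.propDecidable _) ((θ.val z : ℝ) : EReal) ⊤

/-- The subdifferential (of convex analysis) of the CPWL function. -/
def subdiff (z : Ev m) : Set (Ev m) :=
  {v | z ∈ θ.dom ∧ ∀ z' ∈ θ.dom, ⟪v, z' - z⟫ ≤ θ.val z' - θ.val z}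

/-- Active indices `K(z)` of the max-representation. -/
def Kact (z : Ev m) : Set (Fin θ.l) := {i | θ.val z = ⟪θ.a i, z⟫ - θ.al i}

/-- Active indices `I(z)` of the domain constraints. -/
def Iact (z : Ev m) : Set (Fin θ.p) := {i | ⟪θ.d i, z⟫ = θ.be i}

/-- The critical cone `𝒦(z̄,v̄) = {w ∈ T(z̄; dom θ) : ⟨v̄,w⟩ = θ′(z̄;w)}`. -/
def crit (zb vb : Ev m) : Set (Ev m) :=
  {w | w ∈ tcone θ.dom zb ∧
    Tendsto (fun t : ℝ => (θ.val (zb + t • w) - θ.val zb) / t) (𝓝[>] (0 : ℝ))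
      (𝓝 ⟪vb, w⟫)}

/-- The graph of the subdifferential mapping. -/
def gph : Set (Ev m × Ev m) := {zv | zv.2 ∈ θ.subdiff zv.1}

/-- The graphical derivative `(D∂θ)(z̄,v̄)(u)`. -/
def Dsub (zb vb u : Ev m) : Set (Ev m) := {w | (u, w) ∈ tcone θ.gph (zb, vb)}

/-- The regular coderivative `(D̂*∂θ)(z̄,v̄)(u)`. -/
def Dhat (zb vb u : Ev m) : Set (Ev m) :=
  {w | ∀ h ∈ tcone θ.gph (zb, vb), ⟪w, h.1⟫ - ⟪u, h.2⟫ ≤ 0}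

end CPWL

section VarSys

variable {n m : ℕ}

/-- The adjoint `∇Φ(x)*` of the Jacobian of `Φ` at `x`. -/
def adjD (Φ : Ev n → Ev m) (x : Ev n) : Ev m →L[ℝ] Ev n :=
  ContinuousLinearMap.adjoint (fderiv ℝ Φ x)

/-- `Ψ(x,v) = f(x) + ∇Φ(x)* v`. -/
def Psi (f : Ev n → Ev n) (Φ : Ev n → Ev m) (x : Ev n) (v : Ev m) : Ev n :=
  f x + adjD Φ x v

/-- The partial Jacobian `∇ₓΨ(x̄,v̄)`. -/
def gradxPsi (f : Ev n → Ev n) (Φ : Ev n → Ev m) (xb : Ev n) (vb : Ev m) :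
    Ev n →L[ℝ] Ev n :=
  fderiv ℝ (fun x => Psi f Φ x vb) xb

/-- The Lagrange multiplier set `Λ(x̄)` of the variational system. -/
def Lam (f : Ev n → Ev n) (Φ : Ev n → Ev m) (θ : CPWL m) (xb : Ev n) : Set (Ev m) :=
  {v | Psi f Φ xb v = 0 ∧ v ∈ θ.subdiff (Φ xb)}

/-- `v̄` is a critical multiplier for the variational system. -/
def IsCritical (f : Ev n → Ev n) (Φ : Ev n → Ev m) (θ : CPWL m) (xb : Ev n) (vb : Ev m) :
    Prop :=
  ∃ ξ : Ev n, ξ ≠ 0 ∧ ∃ w ∈ θ.Dsub (Φ xb) vb (fderiv ℝ Φ xb ξ),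
    gradxPsi f Φ xb vb ξ + adjD Φ xb w = 0

/-- The solution map of the canonically perturbed variational system. -/
def Smap (f : Ev n → Ev n) (Φ : Ev n → Ev m) (θ : CPWL m) (p₁ : Ev n) (p₂ : Ev m) :
    Set (Ev n × Ev m) :=
  {xv | Psi f Φ xv.1 xv.2 = p₁ ∧ xv.2 ∈ θ.subdiff (Φ xv.1 + p₂)}

end VarSys

section General

variable {n m : ℕ}

/-- The subdifferential of a general extended-real-valued function. -/
def subdiffE (θ : Ev m → EReal) (z : Ev m) : Set (Ev m) :=
  {v | ∀ z', ((⟪v, z' - z⟫ : ℝ) : EReal) ≤ θ z' - θ z}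

/-- The graph of the subdifferential of a general extended-real-valued function. -/
def gphE (θ : Ev m → EReal) : Set (Ev m × Ev m) := {zv | zv.2 ∈ subdiffE θ zv.1}

/-- The graphical derivative of the subdifferential, general case. -/
def DsubE (θ : Ev m → EReal) (zb vb u : Ev m) : Set (Ev m) :=
  {w | (u, w) ∈ tcone (gphE θ) (zb, vb)}

/-- The Lagrange multiplier set, general case. -/
def LamE (f : Ev n → Ev n) (Φ : Ev n → Ev m) (θ : Ev m → EReal) (xb : Ev n) :
    Set (Ev m) :=
  {v | Psi f Φ xb v = 0 ∧ v ∈ subdiffE θ (Φ xb)}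

/-- The solution map of the canonically perturbed variational system, general case. -/
def SmapE (f : Ev n → Ev n) (Φ : Ev n → Ev m) (θ : Ev m → EReal) (p₁ : Ev n)
    (p₂ : Ev m) : Set (Ev n × Ev m) :=
  {xv | Psi f Φ xv.1 xv.2 = p₁ ∧ xv.2 ∈ subdiffE θ (Φ xv.1 + p₂)}

end General

section Composite

variable {n m : ℕ}

/-- The gradient `∇ₓL(·,v)` of the Lagrangian `L(x,v) = φ₀(x) + ⟨Φ(x),v⟩`. -/
def gradL (φ₀ : Ev n → ℝ) (Φ : Ev n → Ev m) (v : Ev m) (x : Ev n) : Ev n :=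
  gradient (fun y => φ₀ y + ⟪Φ y, v⟫) x

/-- The Hessian `∇²ₓₓL(x̄,v)` as a linear operator. -/
def HessOp (φ₀ : Ev n → ℝ) (Φ : Ev n → Ev m) (v : Ev m) (xb : Ev n) : Ev n →L[ℝ] Ev n :=
  fderiv ℝ (gradL φ₀ Φ v) xb

/-- The Lagrange multiplier set `Λ_com(x̄)` of the composite optimization problem. -/
def LamCom (φ₀ : Ev n → ℝ) (Φ : Ev n → Ev m) (θ : CPWL m) (xb : Ev n) : Set (Ev m) :=
  {v | gradient φ₀ xb + adjD Φ xb v = 0 ∧ v ∈ θ.subdiff (Φ xb)}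

/-- Criticality of a multiplier in the composite optimization setting. -/
def IsCriticalCom (φ₀ : Ev n → ℝ) (Φ : Ev n → Ev m) (θ : CPWL m) (xb : Ev n) (v : Ev m) :
    Prop :=
  ∃ ξ : Ev n, ξ ≠ 0 ∧ ∃ w ∈ θ.Dsub (Φ xb) v (fderiv ℝ Φ xb ξ),
    HessOp φ₀ Φ v xb ξ + adjD Φ xb w = 0

/-- The solution map of the canonically perturbed KKT system of composite optimization. -/
def SKKT (φ₀ : Ev n → ℝ) (Φ : Ev n → Ev m) (θ : CPWL m) (p₁ : Ev n) (p₂ : Ev m) :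
    Set (Ev n × Ev m) :=
  {xv | gradient φ₀ xv.1 + adjD Φ xv.1 xv.2 = p₁ ∧ xv.2 ∈ θ.subdiff (Φ xv.1 + p₂)}

/-- `x̄` is a local minimizer of `φ₀ + θ∘Φ`. -/
def LocalMin (φ₀ : Ev n → ℝ) (Φ : Ev n → Ev m) (θ : CPWL m) (xb : Ev n) : Prop :=
  ∃ U ∈ 𝓝 xb, ∀ x ∈ U,
    ((φ₀ xb : ℝ) : EReal) + θ.eval (Φ xb) ≤ ((φ₀ x : ℝ) : EReal) + θ.eval (Φ x)

end Composite

section Calmness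

variable {n m : ℕ}

/-- Isolated calmness of a solution map at `((0,0), q0)`. -/
def IsolCalm (S : Ev n × Ev m → Set (Ev n × Ev m)) (q0 : Ev n × Ev m) : Prop :=
  ∃ c : ℝ, 0 ≤ c ∧ ∃ U ∈ 𝓝 (0 : Ev n × Ev m), ∃ V ∈ 𝓝 q0,
    ∀ p ∈ U, ∀ q ∈ S p ∩ V, ‖q - q0‖ ≤ c * (‖p.1‖ + ‖p.2‖)

/-- Robust isolated calmness of a solution map at `((0,0), q0)`. -/
def RobustIsolCalm (S : Ev n × Ev m → Set (Ev n × Ev m)) (q0 : Ev n × Ev m) : Prop :=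
  ∃ c : ℝ, 0 ≤ c ∧ ∃ U ∈ 𝓝 (0 : Ev n × Ev m), ∃ V ∈ 𝓝 q0,
    (∀ p ∈ U, ∀ q ∈ S p ∩ V, ‖q - q0‖ ≤ c * (‖p.1‖ + ‖p.2‖)) ∧
    (∀ p ∈ U, (S p ∩ V).Nonempty)

/-- The Lipschitz-like (Aubin) property of a solution map around `((0,0), q0)`. -/
def LipschitzLike (S : Ev n × Ev m → Set (Ev n × Ev m)) (q0 : Ev n × Ev m) : Prop :=
  ∃ c : ℝ, 0 ≤ c ∧ ∃ U ∈ 𝓝 (0 : Ev n × Ev m), ∃ V ∈ 𝓝 q0,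
    ∀ p ∈ U, ∀ p' ∈ U, ∀ q ∈ S p ∩ V, ∃ q' ∈ S p', ‖q - q'‖ ≤ c * ‖p - p'‖

end Calmness

/-!
If `x̄` were not a strict local minimizer, there would be points `y j → x̄`, `y j ≠ x̄`, with
`φ (y j) ≤ φ x̄` whose directions `(y j - x̄) / ‖y j - x̄‖` converge to a unit vector `u`.
The max-part of `θ` is Lipschitz and affine along short rays, so its difference quotients along
`Φ (y j)` converge to the directional derivative `θ'(z̄; ∇Φ(x̄) u)`. The subgradient inequality for
`v̄` bounds this derivative below by `⟨v̄, ∇Φ(x̄) u⟩`, and descent together with stationarity bounds it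
above by the same number, so `∇Φ(x̄) u ∈ 𝒦(z̄, v̄)` and the second-order condition gives
`⟨∇²ₓₓL(x̄,v̄) u, u⟩ > 0`. Hence `L(·, v̄)`, whose gradient vanishes at `x̄`, grows quadratically
along the directions of the `y j`. But `v̄ ∈ ∂θ(z̄)` gives `L(y j, v̄) - L(x̄, v̄) ≤ φ (y j) - φ x̄ ≤ 0`.
-/

theorem eventually_iSup_add_mul_eq {ι : Type*} [Finite ι] [Nonempty ι] (f c : ι → ℝ) :
    ∃ M : ℝ, ∀ᶠ t in 𝓝[>] (0 : ℝ), ⨆ i, (f i + t * c i) = (⨆ i, f i) + t * M := by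
  obtain ⟨i₀, hi₀⟩ := Finite.exists_max f
  have hsup : (⨆ i, f i) = f i₀ :=
    le_antisymm (ciSup_le hi₀) (le_ciSup (Finite.bddAbove_range f) i₀)
  have : Nonempty {i // f i = f i₀} := ⟨⟨i₀, rfl⟩⟩
  obtain ⟨⟨i₁, hi₁⟩, hmax⟩ := Finite.exists_max fun i : {i // f i = f i₀} => c i
  -- near `t = 0` only the active pieces `f i = max f` compete, and among them the steepest wins
  have hdom : ∀ᶠ t in 𝓝[>] (0 : ℝ), ∀ i, f i + t * c i ≤ f i₁ + t * c i₁ := by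
    refine eventually_all.2 fun i => ?_
    rcases (hi₀ i).eq_or_lt with hact | hlt
    · filter_upwards [self_mem_nhdsWithin] with t (ht : 0 < t)
      nlinarith [hmax ⟨i, hact⟩]
    · have hlim : Tendsto (fun t => f i + t * (c i - c i₁)) (𝓝[>] 0) (𝓝 (f i)) := by
        simpa using (tendsto_const_nhds.add (tendsto_id.mul_const (c i - c i₁))).mono_left
          (nhdsWithin_le_nhds (a := (0 : ℝ)))
      filter_upwards [hlim.eventually_lt_const (hi₁ ▸ hlt)] with t ht
      linarith
  refine ⟨c i₁, hdom.mono fun t ht => ?_⟩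
  rw [hsup, ← hi₁]
  exact le_antisymm (ciSup_le ht)
    (le_ciSup (f := fun i => f i + t * c i) (Finite.bddAbove_range _) i₁)

theorem LipschitzWith.tendsto_slope_of_tendsto_slope {E α : Type*} [NormedAddCommGroup E]
    [NormedSpace ℝ E] {f : E → ℝ} {K : NNReal} (hf : LipschitzWith K f) {z w : E} {M : ℝ}
    (hM : Tendsto (fun t : ℝ => (f (z + t • w) - f z) / t) (𝓝[>] 0) (𝓝 M))
    {l : Filter α} {s : α → ℝ} {y : α → E} (hs : Tendsto s l (𝓝[>] 0))
    (hy : Tendsto (fun i => (s i)⁻¹ • (y i - z)) l (𝓝 w)) :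
    Tendsto (fun i => (f (y i) - f z) / s i) l (𝓝 M) := by
  have herr : Tendsto (fun i => (f (y i) - f (z + s i • w)) / s i) l (𝓝 0) := by
    have hbound : Tendsto (fun i => K * ‖(s i)⁻¹ • (y i - z) - w‖) l (𝓝 0) := by
      simpa using ((hy.sub_const w).norm).const_mul (K : ℝ)
    refine squeeze_zero_norm' ?_ hbound
    filter_upwards [hs self_mem_nhdsWithin] with i (hi : 0 < s i)
    have hdist : dist (y i) (z + s i • w) = s i * ‖(s i)⁻¹ • (y i - z) - w‖ := by
      have hrescale : y i - (z + s i • w) = s i • ((s i)⁻¹ • (y i - z) - w) := by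
        rw [smul_sub, smul_inv_smul₀ hi.ne', sub_add_eq_sub_sub]
      rw [dist_eq_norm, hrescale, norm_smul, Real.norm_of_nonneg hi.le]
    rw [norm_div, Real.norm_of_nonneg hi.le, div_le_iff₀ hi, ← dist_eq_norm]
    calc dist (f (y i)) (f (z + s i • w)) ≤ K * dist (y i) (z + s i • w) := hf.dist_le_mul _ _
      _ = K * ‖(s i)⁻¹ • (y i - z) - w‖ * s i := by rw [hdist]; ring
  refine (zero_add M ▸ herr.add (hM.comp hs)).congr fun i => ?_
  simp only [Function.comp_apply, ← add_div, sub_add_sub_cancel]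

theorem HasFDerivAt.tendsto_slope_of_tendsto_dir {E F α : Type*} [NormedAddCommGroup E]
    [NormedSpace ℝ E] [NormedAddCommGroup F] [NormedSpace ℝ F] {f : E → F} {f' : E →L[ℝ] F}
    {x₀ : E} (hf : HasFDerivAt f f' x₀) {l : Filter α} {y : α → E} {u : E}
    (hy : Tendsto y l (𝓝 x₀)) (hu : Tendsto (fun i => ‖y i - x₀‖⁻¹ • (y i - x₀)) l (𝓝 u)) :
    Tendsto (fun i => ‖y i - x₀‖⁻¹ • (f (y i) - f x₀)) l (𝓝 (f' u)) := by
  simpa using hf.hasFDerivWithinAt.lim (s := univ) (tendsto_sub_nhds_zero_iff.2 hy)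
    (.of_forall fun _ => mem_univ _) hu

theorem eventually_nhdsNE_of_forall_seq {E : Type*} [NormedAddCommGroup E] [NormedSpace ℝ E]
    [ProperSpace E] {x₀ : E} {P : E → Prop}
    (h : ∀ (y : ℕ → E) (u : E), (∀ j, y j ≠ x₀) → Tendsto y atTop (𝓝 x₀) →
      Tendsto (fun j => ‖y j - x₀‖⁻¹ • (y j - x₀)) atTop (𝓝 u) → ‖u‖ = 1 →
      (∀ j, ¬P (y j)) → False) :
    ∀ᶠ x in 𝓝[≠] x₀, P x := by
  by_contra hP
  obtain ⟨y, hy, hyP⟩ := frequently_iff_seq_forall.1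
    (frequently_nhdsWithin_iff.1 (not_eventually.1 hP))
  have hsphere : ∀ j, ‖y j - x₀‖⁻¹ • (y j - x₀) ∈ Metric.sphere (0 : E) 1 := fun j => by
    rw [mem_sphere_zero_iff_norm, norm_smul, norm_inv, norm_norm,
      inv_mul_cancel₀ (norm_ne_zero_iff.2 (sub_ne_zero.2 (hyP j).2))]
  obtain ⟨u, hu, ψ, hψ, hlim⟩ := (isCompact_sphere (0 : E) 1).tendsto_subseq hsphere
  exact h (y ∘ ψ) u (fun j => (hyP (ψ j)).2) (hy.comp hψ.tendsto_atTop) hlim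
    (mem_sphere_zero_iff_norm.1 hu) (fun j => (hyP (ψ j)).1)

theorem exists_growth_of_hasFDerivAt_gradient {E : Type*} [NormedAddCommGroup E]
    [InnerProductSpace ℝ E] [CompleteSpace E] {L : E → ℝ} {x₀ : E} {H : E →L[ℝ] E}
    (hL : DifferentiableAt ℝ L x₀) (hg : gradient L x₀ = 0)
    (hH : HasFDerivAt (gradient L) H x₀) {κ : ℝ} (hκ : 0 < κ) :
    ∃ δ > 0, ∀ v : E, ‖v‖ = 1 → κ ≤ ⟪H v, v⟫ → ∀ s, 0 ≤ s → s < δ →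
      L x₀ + κ / 4 * s ^ 2 ≤ L (x₀ + s • v) := by
  obtain ⟨δ, hδ, hball⟩ := Metric.eventually_nhds_iff.1 (hH.isLittleO.def (half_pos hκ))
  refine ⟨δ, hδ, fun v hv hHv s hs0 hsδ => ?_⟩
  have hnorm : ∀ σ, 0 ≤ σ → ‖σ • v‖ = σ := fun σ hσ => by
    rw [norm_smul, hv, mul_one, Real.norm_of_nonneg hσ]
  have hslope : ∀ σ, 0 ≤ σ → σ < δ → κ / 2 * σ ≤ ⟪gradient L (x₀ + σ • v), v⟫ := by
    intro σ hσ0 hσδ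
    have herr := hball (show dist (x₀ + σ • v) x₀ < δ by
      rwa [dist_eq_norm, add_sub_cancel_left, hnorm σ hσ0])
    rw [hg, sub_zero, add_sub_cancel_left, hnorm σ hσ0, map_smul] at herr
    have hinner := real_inner_le_norm (H (σ • v) - gradient L (x₀ + σ • v)) v
    rw [norm_sub_rev, hv, mul_one, inner_sub_left, map_smul, real_inner_smul_left] at hinner
    nlinarith
  -- off `x₀` the gradient is nonzero on the segment, so it is not the junk value of `gradient`
  have hdiff : ∀ σ, 0 ≤ σ → σ < δ → DifferentiableAt ℝ L (x₀ + σ • v) := by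
    intro σ hσ0 hσδ
    rcases hσ0.eq_or_lt with rfl | hσ
    · simpa using hL
    by_contra hnd
    have hpos := hslope σ hσ0 hσδ
    rw [gradient_eq_zero_of_not_differentiableAt hnd, inner_zero_left] at hpos
    nlinarith
  have hderiv : ∀ σ, 0 ≤ σ → σ < δ → HasDerivAt (fun σ => L (x₀ + σ • v) - κ / 4 * σ ^ 2)
      (⟪gradient L (x₀ + σ • v), v⟫ - κ / 2 * σ) σ := by
    intro σ hσ0 hσδ
    have hline : HasDerivAt (fun σ : ℝ => x₀ + σ • v) v σ := by
      simpa using ((hasDerivAt_id σ).smul_const v).const_add x₀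
    have hL' := (hdiff σ hσ0 hσδ).hasFDerivAt.comp_hasDerivAt σ hline
    rw [← InnerProductSpace.toDual_symm_apply, ← gradient] at hL'
    exact (hL'.sub ((hasDerivAt_pow 2 σ).const_mul (κ / 4))).congr_deriv (by push_cast; ring)
  have hmono : MonotoneOn (fun σ => L (x₀ + σ • v) - κ / 4 * σ ^ 2) (Icc 0 s) := by
    refine monotoneOn_of_hasDerivWithinAt_nonneg (convex_Icc 0 s)
      (f' := fun σ => ⟪gradient L (x₀ + σ • v), v⟫ - κ / 2 * σ)
      (fun σ hσ => (hderiv σ hσ.1 (hσ.2.trans_lt hsδ)).continuousAt.continuousWithinAt)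
      (fun σ hσ => ?_) (fun σ hσ => ?_) <;> rw [interior_Icc] at hσ
    · exact (hderiv σ hσ.1.le (hσ.2.trans hsδ)).hasDerivWithinAt
    · linarith [hslope σ hσ.1.le (hσ.2.trans hsδ)]
  have hends := hmono ⟨le_rfl, hs0⟩ ⟨hs0, le_rfl⟩ hs0
  simp only [zero_smul, add_zero] at hends
  linarith

theorem eventually_lt_of_tendsto_dir {E : Type*} [NormedAddCommGroup E]
    [InnerProductSpace ℝ E] [CompleteSpace E] {L : E → ℝ} {x₀ : E} {H : E →L[ℝ] E}
    (hL : DifferentiableAt ℝ L x₀) (hg : gradient L x₀ = 0)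
    (hH : HasFDerivAt (gradient L) H x₀) {y : ℕ → E} {u : E} (hne : ∀ j, y j ≠ x₀)
    (hy : Tendsto y atTop (𝓝 x₀)) (hu : Tendsto (fun j => ‖y j - x₀‖⁻¹ • (y j - x₀)) atTop (𝓝 u))
    (hpos : 0 < ⟪H u, u⟫) :
    ∀ᶠ j in atTop, L x₀ < L (y j) := by
  obtain ⟨δ, hδ, hgrowth⟩ := exists_growth_of_hasFDerivAt_gradient hL hg hH (half_pos hpos)
  have hcurv : ∀ᶠ j in atTop,
      ⟪H u, u⟫ / 2 ≤ ⟪H (‖y j - x₀‖⁻¹ • (y j - x₀)), ‖y j - x₀‖⁻¹ • (y j - x₀)⟫ :=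
    (((H.continuous.tendsto u).comp hu).inner hu).eventually (le_mem_nhds (half_lt_self hpos))
  have hclose : ∀ᶠ j in atTop, ‖y j - x₀‖ < δ :=
    (tendsto_iff_norm_sub_tendsto_zero.1 hy).eventually (gt_mem_nhds hδ)
  filter_upwards [hcurv, hclose] with j hcurv hclose
  have hs : 0 < ‖y j - x₀‖ := norm_pos_iff.2 (sub_ne_zero.2 (hne j))
  have hunit : ‖‖y j - x₀‖⁻¹ • (y j - x₀)‖ = 1 := by
    rw [norm_smul, norm_inv, norm_norm, inv_mul_cancel₀ hs.ne']
  have hgrow := hgrowth _ hunit hcurv _ hs.le hclose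
  rw [smul_inv_smul₀ hs.ne', add_sub_cancel] at hgrow
  have hgain : 0 < ⟪H u, u⟫ / 2 / 4 * ‖y j - x₀‖ ^ 2 := by positivity
  linarith

namespace CPWL

variable {m : ℕ} (θ : CPWL m)

instance : Nonempty (Fin θ.l) := ⟨⟨0, θ.hl⟩⟩

theorem le_val (z : Ev m) (i : Fin θ.l) : ⟪θ.a i, z⟫ - θ.al i ≤ θ.val z :=
  le_ciSup (f := fun i => ⟪θ.a i, z⟫ - θ.al i) (Finite.bddAbove_range _) i

theorem lipschitzWith_val : LipschitzWith (∑ i, ‖θ.a i‖₊) θ.val := by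
  refine LipschitzWith.of_le_add_mul _ fun z z' => ciSup_le fun i => ?_
  have hi : ‖θ.a i‖ ≤ ∑ j, ‖θ.a j‖ :=
    Finset.single_le_sum (f := fun j => ‖θ.a j‖) (fun _ _ => norm_nonneg _) (Finset.mem_univ i)
  have hinner : ⟪θ.a i, z - z'⟫ ≤ ‖θ.a i‖ * dist z z' :=
    dist_eq_norm z z' ▸ real_inner_le_norm _ _
  rw [inner_sub_right] at hinner
  push_cast
  nlinarith [θ.le_val z' i, dist_nonneg (x := z) (y := z')]

theorem exists_tendsto_slope (z w : Ev m) :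
    ∃ M : ℝ, Tendsto (fun t : ℝ => (θ.val (z + t • w) - θ.val z) / t) (𝓝[>] 0) (𝓝 M) := by
  obtain ⟨M, hM⟩ := eventually_iSup_add_mul_eq (fun i => ⟪θ.a i, z⟫ - θ.al i)
    (fun i => ⟪θ.a i, w⟫)
  refine ⟨M, tendsto_const_nhds.congr' ?_⟩
  filter_upwards [hM, self_mem_nhdsWithin] with t ht (ht0 : 0 < t)
  have hval : θ.val (z + t • w) = ⨆ i, (⟪θ.a i, z⟫ - θ.al i + t * ⟪θ.a i, w⟫) := by
    simp only [val, inner_add_right, real_inner_smul_right, sub_add_eq_add_sub]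
  rw [hval, ht, val]
  field_simp
  ring

theorem coe_add_eval_le_coe_add_eval_iff {a b : ℝ} {z z' : Ev m} (hz : z ∈ θ.dom) :
    (a : EReal) + θ.eval z' ≤ (b : EReal) + θ.eval z ↔ z' ∈ θ.dom ∧ a + θ.val z' ≤ b + θ.val z := by
  by_cases hz' : z' ∈ θ.dom
  · simp only [eval, if_pos hz, hz', true_and, ← EReal.coe_add]
    exact EReal.coe_le_coe_iff
  · simp [eval, hz, hz', ← EReal.coe_add]

theorem add_inner_le_of_add_val_le {z z' vb : Ev m} {a a' : ℝ} (hv : vb ∈ θ.subdiff z)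
    (hz' : z' ∈ θ.dom) (h : a' + θ.val z' ≤ a + θ.val z) : a' + ⟪z', vb⟫ ≤ a + ⟪z, vb⟫ := by
  have hsub := hv.2 z' hz'
  rw [inner_sub_right, real_inner_comm z', real_inner_comm z] at hsub
  linarith

theorem mem_crit_of_tendsto {z vb w : Ev m} (hv : vb ∈ θ.subdiff z) {s r : ℕ → ℝ}
    {zs : ℕ → Ev m} (hs0 : ∀ j, 0 < s j) (hs : Tendsto s atTop (𝓝 0))
    (hdom : ∀ j, zs j ∈ θ.dom) (hw : Tendsto (fun j => (s j)⁻¹ • (zs j - z)) atTop (𝓝 w))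
    (hle : ∀ j, (θ.val (zs j) - θ.val z) / s j ≤ r j) (hr : Tendsto r atTop (𝓝 ⟪vb, w⟫)) :
    w ∈ θ.crit z vb := by
  obtain ⟨M, hM⟩ := θ.exists_tendsto_slope z w
  have hslope := θ.lipschitzWith_val.tendsto_slope_of_tendsto_slope hM
    (tendsto_nhdsWithin_iff.2 ⟨hs, .of_forall hs0⟩) hw
  have hlow : ⟪vb, w⟫ ≤ M := by
    refine le_of_tendsto_of_tendsto' (tendsto_const_nhds.inner hw) hslope fun j => ?_
    rw [real_inner_smul_right, div_eq_inv_mul]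
    exact mul_le_mul_of_nonneg_left (hv.2 _ (hdom j)) (inv_pos.2 (hs0 j)).le
  have hzs : Tendsto zs atTop (𝓝 z) := by
    have h0 : Tendsto (fun j => s j • ((s j)⁻¹ • (zs j - z))) atTop (𝓝 ((0 : ℝ) • w)) :=
      hs.smul hw
    simp only [smul_inv_smul₀ (hs0 _).ne', zero_smul] at h0
    exact tendsto_sub_nhds_zero_iff.1 h0
  refine ⟨⟨zs, fun j => (s j)⁻¹, hdom, fun j => (inv_pos.2 (hs0 j)).le, hzs, hw⟩, ?_⟩
  rwa [le_antisymm (le_of_tendsto_of_tendsto' hslope hr hle) hlow] at hM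

end CPWL

section Composite

variable {n m : ℕ} {θ : CPWL m} {φ₀ : Ev n → ℝ} {Φ : Ev n → Ev m} {xb : Ev n} {vb : Ev m}

theorem hasGradientAt_add_inner (hφ : DifferentiableAt ℝ φ₀ xb) (hΦ : DifferentiableAt ℝ Φ xb)
    (v : Ev m) :
    HasGradientAt (fun x => φ₀ x + ⟪Φ x, v⟫) (gradient φ₀ xb + adjD Φ xb v) xb := by
  rw [hasGradientAt_iff_hasFDerivAt]
  have hinner : HasFDerivAt (fun x => ⟪Φ x, v⟫) ((innerSL ℝ v).comp (fderiv ℝ Φ xb)) xb := by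
    simp_rw [real_inner_comm v]
    exact (innerSL ℝ v).hasFDerivAt.comp xb hΦ.hasFDerivAt
  refine (hφ.hasFDerivAt.add hinner).congr_fderiv (ContinuousLinearMap.ext fun h => ?_)
  simp [gradient, adjD, ContinuousLinearMap.adjoint_inner_left]

theorem fderiv_mem_crit_of_descent (hφ : DifferentiableAt ℝ φ₀ xb)
    (hΦ : DifferentiableAt ℝ Φ xb) (hvb : vb ∈ LamCom φ₀ Φ θ xb) {y : ℕ → Ev n} {u : Ev n}
    (hne : ∀ j, y j ≠ xb) (hy : Tendsto y atTop (𝓝 xb))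
    (hu : Tendsto (fun j => ‖y j - xb‖⁻¹ • (y j - xb)) atTop (𝓝 u))
    (hdom : ∀ j, Φ (y j) ∈ θ.dom)
    (hdesc : ∀ j, φ₀ (y j) + θ.val (Φ (y j)) ≤ φ₀ xb + θ.val (Φ xb)) :
    fderiv ℝ Φ xb u ∈ θ.crit (Φ xb) vb := by
  have hs : ∀ j, 0 < ‖y j - xb‖ := fun j => norm_pos_iff.2 (sub_ne_zero.2 (hne j))
  have hφu : fderiv ℝ φ₀ xb u = -⟪vb, fderiv ℝ Φ xb u⟫ := by
    rw [← InnerProductSpace.toDual_symm_apply, ← gradient, eq_neg_of_add_eq_zero_left hvb.1,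
      inner_neg_left, adjD, ContinuousLinearMap.adjoint_inner_left]
  refine θ.mem_crit_of_tendsto (r := fun j => -(‖y j - xb‖⁻¹ • (φ₀ (y j) - φ₀ xb))) hvb.2 hs
    (tendsto_iff_norm_sub_tendsto_zero.1 hy) hdom
    (hΦ.hasFDerivAt.tendsto_slope_of_tendsto_dir hy hu) (fun j => ?_) ?_
  · rw [smul_eq_mul, ← mul_neg, div_eq_inv_mul]
    exact mul_le_mul_of_nonneg_left (by linarith [hdesc j]) (inv_pos.2 (hs j)).le
  · simpa [hφu] using (hφ.hasFDerivAt.tendsto_slope_of_tendsto_dir hy hu).neg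

end Composite

theorem stmt8_general {n m : ℕ} (θ : CPWL m) (φ₀ : Ev n → ℝ) (Φ : Ev n → Ev m)
    (xb : Ev n) (vb : Ev m)
    (hphi : DifferentiableAt ℝ φ₀ xb) (hPhi : DifferentiableAt ℝ Φ xb)
    (hgrad : DifferentiableAt ℝ (gradL φ₀ Φ vb) xb)
    (hvb : vb ∈ LamCom φ₀ Φ θ xb)
    (sosc : ∀ u : Ev n, u ≠ 0 → fderiv ℝ Φ xb u ∈ θ.crit (Φ xb) vb →
      0 < ⟪HessOp φ₀ Φ vb xb u, u⟫) :
    ∃ U ∈ 𝓝 xb, ∀ x ∈ U, x ≠ xb →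
      ((φ₀ xb : ℝ) : EReal) + θ.eval (Φ xb) < ((φ₀ x : ℝ) : EReal) + θ.eval (Φ x) := by
  have hL := hasGradientAt_add_inner hphi hPhi vb
  refine ⟨_, eventually_nhdsWithin_iff.1 (eventually_nhdsNE_of_forall_seq
    fun y u hne hy hu hu1 hnot => ?_), fun x hx hne => hx hne⟩
  have hdesc : ∀ j, Φ (y j) ∈ θ.dom ∧ φ₀ (y j) + θ.val (Φ (y j)) ≤ φ₀ xb + θ.val (Φ xb) :=
    fun j => (θ.coe_add_eval_le_coe_add_eval_iff hvb.2.1).1 (not_lt.1 (hnot j))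
  have hcrit := fderiv_mem_crit_of_descent hphi hPhi hvb hne hy hu (fun j => (hdesc j).1)
    (fun j => (hdesc j).2)
  have hpos := sosc u (norm_ne_zero_iff.1 (hu1 ▸ one_ne_zero)) hcrit
  obtain ⟨j, hj⟩ := (eventually_lt_of_tendsto_dir hL.differentiableAt (hL.gradient.trans hvb.1)
    hgrad.hasFDerivAt hne hy hu hpos).exists
  exact hj.not_ge (θ.add_inner_le_of_add_val_le hvb.2 (hdesc j).1 (hdesc j).2)

/-- the second-order sufficient condition yields strict local minimality
in composite optimization. -/
theorem stmt8 {n m : ℕ} (θ : CPWL m) (φ₀ : Ev n → ℝ) (Φ : Ev n → Ev m)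
    (xb : Ev n) (vb : Ev m)
    (hphi : DifferentiableAt ℝ φ₀ xb) (hPhi : DifferentiableAt ℝ Φ xb)
    (hgrad : DifferentiableAt ℝ (gradL φ₀ Φ vb) xb)
    (hdom : Φ xb ∈ θ.dom)
    (hne : (LamCom φ₀ Φ θ xb).Nonempty) (hvb : vb ∈ LamCom φ₀ Φ θ xb)
    (sosc : ∀ u : Ev n, u ≠ 0 → fderiv ℝ Φ xb u ∈ θ.crit (Φ xb) vb →
      0 < ⟪HessOp φ₀ Φ vb xb u, u⟫) :
    ∃ U ∈ 𝓝 xb, ∀ x ∈ U, x ≠ xb →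
      ((φ₀ xb : ℝ) : EReal) + θ.eval (Φ xb) < ((φ₀ x : ℝ) : EReal) + θ.eval (Φ x) :=
  stmt8_general θ φ₀ Φ xb vb hphi hPhi hgrad hvb sosc
end
end

section
/- Let θ : ℝ^m → ℝ ∪ {+∞} be a proper lower semicontinuous convex function and let x̄, v̄, Ψ, Λ(x̄) be as in the variational-system setting with v̄ ∈ Λ(x̄). Then the solution map S is isolatedly calm at ((0,0),(x̄,v̄)) if and only if the only pair (ξ,η) ∈ ℝ^n × ℝ^m satisfying ∇ₓΨ(x̄,v̄)ξ + ∇Φ(x̄)*η = 0 and η ∈ (D∂θ)(z̄,v̄)(∇Φ(x̄)ξ) is (ξ,η) = (0,0); moreover, in that case there is a neighborhood V of (x̄,v̄) with S(0,0) ∩ V = {(x̄,v̄)}. -/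
open Filter Topology Set RealInnerProductSpace

noncomputable section

/-!
Both implications are blow-up arguments along sequences. If `S` is not isolatedly calm at
`(x̄, v̄)`, there are solutions `q_k ∈ S(p_k)` with `q_k → (x̄, v̄)` and
`‖p_k‖ = o(‖q_k - (x̄, v̄)‖)`; normalizing `q_k - (x̄, v̄)` and using compactness of the unit
sphere yields a unit direction `(ξ, η)`. Differentiability of `Ψ` turns `Ψ(q_k) = p₁` into the
linearized equation, and the points `(Φ(x_k) + p₂, v_k)` of `gph ∂θ` exhibit `(∇Φ(x̄)ξ, η)` as a
tangent to `gph ∂θ`. Conversely, a tangent `(∇Φ(x̄)ξ, η)` realized by `(z_k, v_k) ∈ gph ∂θ` at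
rate `c_k → ∞` gives the points `(x̄ + c_k⁻¹ ξ, v_k) ∈ S(p_k)`, and when `(ξ, η)` solves the
linearized equation the perturbations `p_k` are `o(1/c_k)`, so calmness forces `(ξ, η) = 0`.
-/

section SequentialTangents

variable {E F : Type*} [NormedAddCommGroup E] [NormedSpace ℝ E]
  [NormedAddCommGroup F] [NormedSpace ℝ F]

theorem HasFDerivAt.tendsto_smul_sub {g : E → F} {A : E →L[ℝ] F} {a : E}
    (hg : HasFDerivAt g A a) {q : ℕ → E} {c : ℕ → ℝ} {d : E} (hq : Tendsto q atTop (𝓝 a))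
    (hc : Tendsto (fun k => c k • (q k - a)) atTop (𝓝 d)) :
    Tendsto (fun k => c k • (g (q k) - g a)) atTop (𝓝 (A d)) := by
  have hrem : Tendsto (fun k => c k • (g (q k) - g a - A (q k - a))) atTop (𝓝 0) :=
    (Asymptotics.isLittleO_one_iff ℝ).mp
      (((Asymptotics.isBigO_refl c atTop).smul_isLittleO
        (hg.isLittleO.comp_tendsto hq)).trans_isBigO (hc.isBigO_one ℝ))
  have hlin : Tendsto (fun k => A (c k • (q k - a))) atTop (𝓝 (A d)) :=
    (A.continuous.tendsto d).comp hc
  refine (add_zero (A d) ▸ hlin.add hrem).congr fun k => ?_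
  simp only [map_smul, map_sub, smul_sub]
  abel

theorem tendsto_zero_of_tendsto_smul {y : ℕ → E} {c : ℕ → ℝ} {v : E}
    (hc : Tendsto c atTop atTop) (hy : Tendsto (fun k => c k • y k) atTop (𝓝 v)) :
    Tendsto y atTop (𝓝 0) := by
  refine (zero_smul ℝ v ▸ hc.inv_tendsto_atTop.smul hy).congr' ?_
  filter_upwards [hc.eventually_gt_atTop 0] with k hk
  rw [Pi.inv_apply, smul_smul, inv_mul_cancel₀ hk.ne', one_smul]

theorem tendsto_atTop_of_tendsto_smul_sub {z : ℕ → E} {c : ℕ → ℝ} {x w : E} (hw : w ≠ 0)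
    (hc0 : ∀ k, 0 ≤ c k) (hz : Tendsto z atTop (𝓝 x))
    (hc : Tendsto (fun k => c k • (z k - x)) atTop (𝓝 w)) : Tendsto c atTop atTop := by
  have hnorm : Tendsto (fun k => ‖c k • (z k - x)‖) atTop (𝓝 ‖w‖) := hc.norm
  have hpos : ∀ᶠ k in atTop, 0 < ‖c k • (z k - x)‖ :=
    hnorm.eventually (lt_mem_nhds (norm_pos_iff.2 hw))
  have hdist : Tendsto (fun k => ‖z k - x‖) atTop (𝓝[>] 0) := by
    refine tendsto_nhdsWithin_iff.2 ⟨tendsto_iff_norm_sub_tendsto_zero.1 hz, ?_⟩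
    filter_upwards [hpos] with k hk
    exact norm_pos_iff.2 fun h => by simp [h] at hk
  refine (hnorm.pos_mul_atTop (norm_pos_iff.2 hw) hdist.inv_tendsto_nhdsGT_zero).congr' ?_
  filter_upwards [hdist.eventually self_mem_nhdsWithin] with k hk
  rw [Pi.inv_apply, norm_smul, Real.norm_of_nonneg (hc0 k), mul_inv_cancel_right₀ hk.ne']

theorem exists_seq_tendsto_atTop_of_mem_tcone {s : Set E} {x w : E} (hx : x ∈ s)
    (hw : w ∈ tcone s x) :
    ∃ (z : ℕ → E) (c : ℕ → ℝ), (∀ k, z k ∈ s) ∧ Tendsto c atTop atTop ∧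
      Tendsto z atTop (𝓝 x) ∧ Tendsto (fun k => c k • (z k - x)) atTop (𝓝 w) := by
  rcases eq_or_ne w 0 with rfl | hw0
  · exact ⟨fun _ => x, fun k => k, fun _ => hx, tendsto_natCast_atTop_atTop,
      tendsto_const_nhds, by simp⟩
  · obtain ⟨z, c, hzs, hc0, hz, hc⟩ := hw
    exact ⟨z, c, hzs, tendsto_atTop_of_tendsto_smul_sub hw0 hc0 hz hc, hz, hc⟩

theorem exists_subseq_inv_norm_smul_tendsto [ProperSpace E] {y : ℕ → E} (hy : ∀ k, y k ≠ 0) :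
    ∃ (φ : ℕ → ℕ) (w : E), StrictMono φ ∧ w ≠ 0 ∧
      Tendsto (fun k => ‖y (φ k)‖⁻¹ • y (φ k)) atTop (𝓝 w) := by
  have hmem : ∀ k, ‖y k‖⁻¹ • y k ∈ Metric.sphere (0 : E) 1 := fun k => by
    rw [mem_sphere_zero_iff_norm, norm_smul, norm_inv, norm_norm,
      inv_mul_cancel₀ (norm_ne_zero_iff.2 (hy k))]
  obtain ⟨w, hw, φ, hφ, hlim⟩ := (isCompact_sphere (0 : E) 1).tendsto_subseq hmem
  exact ⟨φ, w, hφ, Metric.ne_of_mem_sphere hw one_ne_zero, hlim⟩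

end SequentialTangents

section IsolatedCalmness

variable {n m : ℕ} {S : Ev n × Ev m → Set (Ev n × Ev m)} {q0 : Ev n × Ev m}

theorem IsolCalm.eq_zero_of_tendsto (hS : IsolCalm S q0) {p q : ℕ → Ev n × Ev m}
    {c : ℕ → ℝ} {w : Ev n × Ev m} (hqS : ∀ k, q k ∈ S (p k)) (hp : Tendsto p atTop (𝓝 0))
    (hq : Tendsto q atTop (𝓝 q0)) (hcp : Tendsto (fun k => c k • p k) atTop (𝓝 0))
    (hcq : Tendsto (fun k => c k • (q k - q0)) atTop (𝓝 w)) : w = 0 := by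
  obtain ⟨ℓ, -, U, hU, V, hV, hbound⟩ := hS
  have hle : ∀ᶠ k in atTop,
      ‖c k • (q k - q0)‖ ≤ ℓ * (‖(c k • p k).1‖ + ‖(c k • p k).2‖) := by
    filter_upwards [hp hU, hq hV] with k hpU hqV
    simp only [Prod.smul_fst, Prod.smul_snd, norm_smul]
    calc ‖c k‖ * ‖q k - q0‖ ≤ ‖c k‖ * (ℓ * (‖(p k).1‖ + ‖(p k).2‖)) :=
          mul_le_mul_of_nonneg_left (hbound _ hpU _ ⟨hqS k, hqV⟩) (norm_nonneg _)
      _ = ℓ * (‖c k‖ * ‖(p k).1‖ + ‖c k‖ * ‖(p k).2‖) := by ring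
  have hlim : Tendsto (fun k => ℓ * (‖(c k • p k).1‖ + ‖(c k • p k).2‖)) atTop (𝓝 0) := by
    simpa using (((continuous_fst.tendsto 0).comp hcp).norm.add
      ((continuous_snd.tendsto 0).comp hcp).norm).const_mul ℓ
  exact norm_le_zero_iff.1 (le_of_tendsto_of_tendsto hcq.norm hlim hle)

theorem IsolCalm.exists_inter_eq_singleton (hS : IsolCalm S q0) (h0 : q0 ∈ S 0) :
    ∃ V ∈ 𝓝 q0, S 0 ∩ V = {q0} := by
  obtain ⟨ℓ, -, U, hU, V, hV, hbound⟩ := hS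
  refine ⟨V, hV, eq_singleton_iff_unique_mem.2 ⟨⟨h0, mem_of_mem_nhds hV⟩, fun q hq => ?_⟩⟩
  have h := hbound 0 (mem_of_mem_nhds hU) q hq
  simp only [Prod.fst_zero, Prod.snd_zero, norm_zero, add_zero, mul_zero] at h
  exact sub_eq_zero.1 (norm_le_zero_iff.1 h)

theorem exists_seq_of_not_isolCalm (hS : ¬IsolCalm S q0) :
    ∃ p q : ℕ → Ev n × Ev m, (∀ k, q k ∈ S (p k)) ∧ Tendsto p atTop (𝓝 0) ∧
      Tendsto q atTop (𝓝 q0) ∧ ∀ k : ℕ, ((k : ℝ) + 1) * ‖p k‖ < ‖q k - q0‖ := by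
  simp only [IsolCalm, not_exists, not_and, not_forall, not_le] at hS
  have key : ∀ k : ℕ, ∃ p q : Ev n × Ev m, ‖p‖ < 1 / (k + 1) ∧ q ∈ S p ∧
      ‖q - q0‖ < 1 / (k + 1) ∧ ((k : ℝ) + 1) * ‖p‖ < ‖q - q0‖ := by
    intro k
    have hr : (0 : ℝ) < 1 / (k + 1) := by positivity
    obtain ⟨p, hp, q, ⟨hqS, hqV⟩, hlt⟩ := hS (k + 1) (by positivity) _
      (Metric.ball_mem_nhds 0 hr) _ (Metric.ball_mem_nhds q0 hr)
    refine ⟨p, q, mem_ball_zero_iff.1 hp, hqS, mem_ball_iff_norm.1 hqV, ?_⟩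
    calc ((k : ℝ) + 1) * ‖p‖ ≤ (k + 1) * (‖p.1‖ + ‖p.2‖) := by
          gcongr
          exact max_le_add_of_nonneg (norm_nonneg _) (norm_nonneg _)
      _ < ‖q - q0‖ := hlt
  choose p q hp hqS hq hlt using key
  refine ⟨p, q, hqS, ?_, ?_, hlt⟩
  · exact squeeze_zero_norm (fun k => (hp k).le) tendsto_one_div_add_atTop_nhds_zero_nat
  · exact tendsto_iff_norm_sub_tendsto_zero.2 <| squeeze_zero (fun k => norm_nonneg _)
      (fun k => (hq k).le) tendsto_one_div_add_atTop_nhds_zero_nat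

theorem exists_tendsto_smul_ne_zero_of_not_isolCalm (hS : ¬IsolCalm S q0) :
    ∃ (p q : ℕ → Ev n × Ev m) (c : ℕ → ℝ) (w : Ev n × Ev m), w ≠ 0 ∧
      (∀ k, q k ∈ S (p k)) ∧ Tendsto p atTop (𝓝 0) ∧ Tendsto q atTop (𝓝 q0) ∧
      (∀ k, 0 ≤ c k) ∧ Tendsto (fun k => c k • p k) atTop (𝓝 0) ∧
      Tendsto (fun k => c k • (q k - q0)) atTop (𝓝 w) := by
  obtain ⟨p, q, hqS, hp, hq, hlt⟩ := exists_seq_of_not_isolCalm hS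
  have hpos : ∀ k, 0 < ‖q k - q0‖ := fun k => (by positivity : (0 : ℝ) ≤ _).trans_lt (hlt k)
  obtain ⟨φ, w, hφ, hw, hlim⟩ :=
    exists_subseq_inv_norm_smul_tendsto fun k => norm_pos_iff.1 (hpos k)
  refine ⟨p ∘ φ, q ∘ φ, fun k => ‖q (φ k) - q0‖⁻¹, w, hw, fun k => hqS (φ k),
    hp.comp hφ.tendsto_atTop, hq.comp hφ.tendsto_atTop, fun k => by positivity, ?_, hlim⟩
  refine squeeze_zero_norm (fun k => ?_) tendsto_one_div_add_atTop_nhds_zero_nat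
  have hk : (k : ℝ) + 1 ≤ φ k + 1 := by exact_mod_cast Nat.add_le_add_right (hφ.id_le k) 1
  rw [Function.comp_apply, norm_smul, norm_inv, norm_norm, inv_mul_eq_div,
    div_le_div_iff₀ (hpos _) (by positivity), one_mul]
  calc ‖p (φ k)‖ * (k + 1) ≤ ‖p (φ k)‖ * (φ k + 1) := by gcongr
    _ ≤ ‖q (φ k) - q0‖ := by linarith [hlt (φ k)]

end IsolatedCalmness

section VariationalSystem

variable {n m : ℕ} {θ : Ev m → EReal} {f : Ev n → Ev n} {Φ : Ev n → Ev m} {xb : Ev n}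
  {vb : Ev m}

theorem differentiableAt_adjD {x : Ev n} (h : DifferentiableAt ℝ (fderiv ℝ Φ) x) :
    DifferentiableAt ℝ (fun y => adjD Φ y) x := by
  have hadj : IsBoundedLinearMap ℝ fun A : Ev n →L[ℝ] Ev m => ContinuousLinearMap.adjoint A :=
    { map_add := map_add _
      map_smul := fun c A => by simp
      bound := ⟨1, one_pos, fun A => by simp⟩ }
  exact hadj.differentiableAt.comp x h

theorem hasFDerivAt_Psi (hf : DifferentiableAt ℝ f xb)
    (hΦ2 : DifferentiableAt ℝ (fderiv ℝ Φ) xb) :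
    HasFDerivAt (fun q : Ev n × Ev m => Psi f Φ q.1 q.2)
      ((gradxPsi f Φ xb vb).coprod (adjD Φ xb)) (xb, vb) := by
  have hadj : DifferentiableAt ℝ (fun q : Ev n × Ev m => adjD Φ q.1) (xb, vb) :=
    DifferentiableAt.comp (f := Prod.fst) (xb, vb) (differentiableAt_adjD hΦ2)
      differentiableAt_fst
  have hΨ : DifferentiableAt ℝ (fun q : Ev n × Ev m => Psi f Φ q.1 q.2) (xb, vb) :=
    (hf.comp _ differentiableAt_fst).add (hadj.clm_apply differentiableAt_snd)
  set L := fderiv ℝ (fun q : Ev n × Ev m => Psi f Φ q.1 q.2) (xb, vb)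
  have hx : HasFDerivAt (fun x => Psi f Φ x vb) (L ∘L .inl ℝ (Ev n) (Ev m)) xb :=
    HasFDerivAt.comp (f := fun x => (x, vb)) xb hΨ.hasFDerivAt (hasFDerivAt_prodMk_left xb vb)
  have hv : HasFDerivAt (fun v => Psi f Φ xb v) (L ∘L .inr ℝ (Ev n) (Ev m)) vb :=
    HasFDerivAt.comp (f := fun v => (xb, v)) vb hΨ.hasFDerivAt (hasFDerivAt_prodMk_right xb vb)
  rw [gradxPsi, hx.fderiv, ((adjD Φ xb).hasFDerivAt.const_add (f xb)).unique hv,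
    ContinuousLinearMap.coprod_comp_inl_inr]
  exact hΨ.hasFDerivAt

theorem gradxPsi_add_adjD_eq_zero_of_tendsto
    (hL : HasFDerivAt (fun q : Ev n × Ev m => Psi f Φ q.1 q.2)
      ((gradxPsi f Φ xb vb).coprod (adjD Φ xb)) (xb, vb))
    (hΨ0 : Psi f Φ xb vb = 0) {p q : ℕ → Ev n × Ev m} {c : ℕ → ℝ} {ξ : Ev n} {η : Ev m}
    (hqS : ∀ k, q k ∈ SmapE f Φ θ (p k).1 (p k).2) (hq : Tendsto q atTop (𝓝 (xb, vb)))
    (hcp : Tendsto (fun k => c k • p k) atTop (𝓝 0))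
    (hcq : Tendsto (fun k => c k • (q k - (xb, vb))) atTop (𝓝 (ξ, η))) :
    gradxPsi f Φ xb vb ξ + adjD Φ xb η = 0 := by
  have hcp₁ : Tendsto (fun k => c k • (p k).1) atTop (𝓝 0) := (continuous_fst.tendsto 0).comp hcp
  refine tendsto_nhds_unique (hL.tendsto_smul_sub hq hcq) (hcp₁.congr fun k => ?_)
  rw [(hqS k).1, hΨ0, sub_zero]

theorem mem_DsubE_of_tendsto (hΦ : HasFDerivAt Φ (fderiv ℝ Φ xb) xb)
    {p q : ℕ → Ev n × Ev m} {c : ℕ → ℝ} {ξ : Ev n} {η : Ev m}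
    (hqS : ∀ k, q k ∈ SmapE f Φ θ (p k).1 (p k).2) (hp : Tendsto p atTop (𝓝 0))
    (hq : Tendsto q atTop (𝓝 (xb, vb))) (hc : ∀ k, 0 ≤ c k)
    (hcp : Tendsto (fun k => c k • p k) atTop (𝓝 0))
    (hcq : Tendsto (fun k => c k • (q k - (xb, vb))) atTop (𝓝 (ξ, η))) :
    η ∈ DsubE θ (Φ xb) vb (fderiv ℝ Φ xb ξ) := by
  have hx : Tendsto (fun k => (q k).1) atTop (𝓝 xb) := (continuous_fst.tendsto _).comp hq
  have hcx : Tendsto (fun k => c k • ((q k).1 - xb)) atTop (𝓝 ξ) :=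
    (continuous_fst.tendsto _).comp hcq
  have hp₂ : Tendsto (fun k => (p k).2) atTop (𝓝 0) := (continuous_snd.tendsto 0).comp hp
  have hcp₂ : Tendsto (fun k => c k • (p k).2) atTop (𝓝 0) := (continuous_snd.tendsto 0).comp hcp
  refine ⟨fun k => (Φ (q k).1 + (p k).2, (q k).2), c, fun k => (hqS k).2, hc, ?_, ?_⟩
  · simpa using ((hΦ.continuousAt.tendsto.comp hx).add hp₂).prodMk_nhds
      ((continuous_snd.tendsto _).comp hq)
  · refine Tendsto.prodMk_nhds ?_ ((continuous_snd.tendsto _).comp hcq)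
    refine (add_zero (fderiv ℝ Φ xb ξ) ▸ (hΦ.tendsto_smul_sub hx hcx).add hcp₂).congr
      fun k => ?_
    simp only [Prod.fst_sub, smul_add, smul_sub]
    abel

theorem exists_seq_of_mem_DsubE
    (hL : HasFDerivAt (fun q : Ev n × Ev m => Psi f Φ q.1 q.2)
      ((gradxPsi f Φ xb vb).coprod (adjD Φ xb)) (xb, vb))
    (hΦ : HasFDerivAt Φ (fderiv ℝ Φ xb) xb) (hΨ0 : Psi f Φ xb vb = 0)
    (hvb : vb ∈ subdiffE θ (Φ xb)) {ξ : Ev n} {η : Ev m}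
    (hlin : gradxPsi f Φ xb vb ξ + adjD Φ xb η = 0)
    (hη : η ∈ DsubE θ (Φ xb) vb (fderiv ℝ Φ xb ξ)) :
    ∃ (p q : ℕ → Ev n × Ev m) (c : ℕ → ℝ), (∀ k, q k ∈ SmapE f Φ θ (p k).1 (p k).2) ∧
      Tendsto p atTop (𝓝 0) ∧ Tendsto q atTop (𝓝 (xb, vb)) ∧
      Tendsto (fun k => c k • p k) atTop (𝓝 0) ∧
      Tendsto (fun k => c k • (q k - (xb, vb))) atTop (𝓝 (ξ, η)) := by
  obtain ⟨z, c, hzG, hc, hz, hcz⟩ := 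
    exists_seq_tendsto_atTop_of_mem_tcone (s := gphE θ) (x := (Φ xb, vb))
      (w := (fderiv ℝ Φ xb ξ, η)) hvb hη
  set x : ℕ → Ev n := fun k => xb + (c k)⁻¹ • ξ
  have hcx : Tendsto (fun k => c k • (x k - xb)) atTop (𝓝 ξ) := by
    refine tendsto_const_nhds.congr' ?_
    filter_upwards [hc.eventually_gt_atTop 0] with k hk
    rw [add_sub_cancel_left, smul_smul, mul_inv_cancel₀ hk.ne', one_smul]
  have hx : Tendsto x atTop (𝓝 xb) := by
    simpa using (tendsto_zero_of_tendsto_smul hc hcx).const_add xb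
  have hq : Tendsto (fun k => (x k, (z k).2)) atTop (𝓝 (xb, vb)) :=
    hx.prodMk_nhds ((continuous_snd.tendsto _).comp hz)
  have hcq : Tendsto (fun k => c k • ((x k, (z k).2) - (xb, vb))) atTop (𝓝 (ξ, η)) :=
    hcx.prodMk_nhds ((continuous_snd.tendsto _).comp hcz)
  have hcΨ : Tendsto (fun k => c k • Psi f Φ (x k) (z k).2) atTop (𝓝 0) := by
    have h := hL.tendsto_smul_sub hq hcq
    rw [ContinuousLinearMap.coprod_apply, hlin] at h
    refine h.congr fun k => ?_
    rw [hΨ0, sub_zero]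
  have hcΦ : Tendsto (fun k => c k • ((z k).1 - Φ (x k))) atTop (𝓝 0) := by
    refine (sub_self (fderiv ℝ Φ xb ξ) ▸ ((continuous_fst.tendsto _).comp hcz).sub
      (hΦ.tendsto_smul_sub hx hcx)).congr fun k => ?_
    show c k • ((z k).1 - Φ xb) - c k • (Φ (x k) - Φ xb) = _
    rw [← smul_sub, sub_sub_sub_cancel_right]
  have hcp := hcΨ.prodMk_nhds hcΦ
  refine ⟨fun k => (Psi f Φ (x k) (z k).2, (z k).1 - Φ (x k)), fun k => (x k, (z k).2), c,
    fun k => ⟨rfl, by rw [add_sub_cancel]; exact hzG k⟩, tendsto_zero_of_tendsto_smul hc hcp,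
    hq, hcp, hcq⟩

end VariationalSystem

theorem stmt12_general {n m : ℕ} (θ : Ev m → EReal) (f : Ev n → Ev n) (Φ : Ev n → Ev m)
    (xb : Ev n) (vb : Ev m)
    (hf : DifferentiableAt ℝ f xb) (hPhi : DifferentiableAt ℝ Φ xb)
    (hPhi2 : DifferentiableAt ℝ (fderiv ℝ Φ) xb)
    (hvb : vb ∈ LamE f Φ θ xb) :
    (IsolCalm (fun p => SmapE f Φ θ p.1 p.2) (xb, vb) ↔
      ∀ (ξ : Ev n) (η : Ev m),
        gradxPsi f Φ xb vb ξ + adjD Φ xb η = 0 →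
        η ∈ DsubE θ (Φ xb) vb (fderiv ℝ Φ xb ξ) → ξ = 0 ∧ η = 0) ∧
    (IsolCalm (fun p => SmapE f Φ θ p.1 p.2) (xb, vb) →
      ∃ V ∈ 𝓝 ((xb, vb) : Ev n × Ev m), SmapE f Φ θ 0 0 ∩ V = {(xb, vb)}) := by
  have hL := hasFDerivAt_Psi (vb := vb) hf hPhi2
  have hΦ := hPhi.hasFDerivAt
  refine ⟨⟨fun hcalm ξ η hlin hη => ?_, fun hinj => ?_⟩, fun hcalm => ?_⟩
  · obtain ⟨p, q, c, hqS, hp, hq, hcp, hcq⟩ :=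
      exists_seq_of_mem_DsubE hL hΦ hvb.1 hvb.2 hlin hη
    exact Prod.mk_eq_zero.1 (hcalm.eq_zero_of_tendsto hqS hp hq hcp hcq)
  · by_contra hnot
    obtain ⟨p, q, c, ⟨ξ, η⟩, hw, hqS, hp, hq, hc, hcp, hcq⟩ :=
      exists_tendsto_smul_ne_zero_of_not_isolCalm hnot
    obtain ⟨rfl, rfl⟩ := hinj ξ η (gradxPsi_add_adjD_eq_zero_of_tendsto hL hvb.1 hqS hq hcp hcq)
      (mem_DsubE_of_tendsto hΦ hqS hp hq hc hcp hcq)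
    exact hw rfl
  · exact hcalm.exists_inter_eq_singleton ⟨hvb.1, by simpa using hvb.2⟩

/-- graphical-derivative characterization of isolated calmness of the solution
map for a general proper lsc convex function `θ`. -/
theorem stmt12 {n m : ℕ} (θ : Ev m → EReal) (f : Ev n → Ev n) (Φ : Ev n → Ev m)
    (xb : Ev n) (vb : Ev m)
    (hbot : ∀ z, θ z ≠ ⊥) (hproper : ∃ z, θ z ≠ ⊤)
    (hlsc : LowerSemicontinuous θ)
    (hconv : ∀ x y : Ev m, ∀ t : ℝ, 0 ≤ t → t ≤ 1 →
      θ (t • x + (1 - t) • y) ≤ (t : EReal) * θ x + ((1 - t : ℝ) : EReal) * θ y)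
    (hf : DifferentiableAt ℝ f xb) (hPhi : DifferentiableAt ℝ Φ xb)
    (hPhi2 : DifferentiableAt ℝ (fderiv ℝ Φ) xb)
    (hvb : vb ∈ LamE f Φ θ xb) :
    (IsolCalm (fun p => SmapE f Φ θ p.1 p.2) (xb, vb) ↔
      ∀ (ξ : Ev n) (η : Ev m),
        gradxPsi f Φ xb vb ξ + adjD Φ xb η = 0 →
        η ∈ DsubE θ (Φ xb) vb (fderiv ℝ Φ xb ξ) → ξ = 0 ∧ η = 0) ∧
    (IsolCalm (fun p => SmapE f Φ θ p.1 p.2) (xb, vb) →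
      ∃ V ∈ 𝓝 ((xb, vb) : Ev n × Ev m), SmapE f Φ θ 0 0 ∩ V = {(xb, vb)}) :=
  stmt12_general θ f Φ xb vb hf hPhi hPhi2 hvb
end
end

section
/- Let θ : ℝ^m → ℝ ∪ {+∞} be convex and finite at z̄ := Φ(x̄), where Φ : ℝ^n → ℝ^m is differentiable at x̄ and φ₀ : ℝ^n → ℝ is differentiable at x̄. If the Lagrange multiplier set Λ_com(x̄) := {v ∈ ℝ^m : ∇φ₀(x̄) + ∇Φ(x̄)*v = 0, v ∈ ∂θ(z̄)} is a singleton, then the basic qualification condition holds: ∂^∞θ(z̄) ∩ ker ∇Φ(x̄)* = {0}, where ∂^∞θ(z̄) := {v : ⟨v, z − z̄⟩ ≤ 0 for all z with θ(z) < +∞}. -/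
open Filter Topology Set RealInnerProductSpace

noncomputable section

/-- uniqueness of the Lagrange multiplier forces the basic qualification
condition for a general convex function. -/
theorem stmt15 {n m : ℕ} (θ : Ev m → EReal) (φ₀ : Ev n → ℝ) (Φ : Ev n → Ev m) (xb : Ev n)
    (hbot : ∀ z, θ z ≠ ⊥)
    (hconv : ∀ x y : Ev m, ∀ t : ℝ, 0 ≤ t → t ≤ 1 →
      θ (t • x + (1 - t) • y) ≤ (t : EReal) * θ x + ((1 - t : ℝ) : EReal) * θ y)
    (hfin : θ (Φ xb) ≠ ⊤)
    (hphi : DifferentiableAt ℝ φ₀ xb) (hPhi : DifferentiableAt ℝ Φ xb)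
    (hsing : ∃ v : Ev m,
      {v' : Ev m | gradient φ₀ xb + adjD Φ xb v' = 0 ∧ v' ∈ subdiffE θ (Φ xb)} = {v}) :
    {v : Ev m | (∀ z : Ev m, θ z ≠ ⊤ → ⟪v, z - Φ xb⟫ ≤ 0) ∧ adjD Φ xb v = 0} = {0} := by
  obtain ⟨vb, hset⟩ := hsing
  have hvb : gradient φ₀ xb + adjD Φ xb vb = 0 ∧ vb ∈ subdiffE θ (Φ xb) := by
    have : vb ∈ ({vb} : Set (Ev m)) := rfl
    rw [← hset] at this
    exact this
  obtain ⟨r, hr⟩ : ∃ r : ℝ, θ (Φ xb) = (r : EReal) := by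
    lift θ (Φ xb) to ℝ using ⟨hfin, hbot _⟩ with r hr
    exact ⟨r, rfl⟩
  ext u
  simp only [Set.mem_setOf_eq, Set.mem_singleton_iff]
  constructor
  · rintro ⟨hu1, hu2⟩
    have hmem : vb + u ∈
        {v' : Ev m | gradient φ₀ xb + adjD Φ xb v' = 0 ∧ v' ∈ subdiffE θ (Φ xb)} := by
      refine ⟨?_, ?_⟩
      · rw [map_add, hu2, add_zero]; exact hvb.1
      · intro z'
        by_cases htop : θ z' = ⊤
        · rw [htop, hr, EReal.top_sub_coe]
          exact le_top
        · have h1 := hvb.2 z'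
          have h2 := hu1 z' htop
          have : ⟪vb + u, z' - Φ xb⟫ ≤ ⟪vb, z' - Φ xb⟫ := by
            rw [inner_add_left]; linarith
          calc ((⟪vb + u, z' - Φ xb⟫ : ℝ) : EReal) ≤ ((⟪vb, z' - Φ xb⟫ : ℝ) : EReal) :=
                EReal.coe_le_coe_iff.mpr this
            _ ≤ θ z' - θ (Φ xb) := h1
    rw [hset] at hmem
    have : vb + u = vb := hmem
    simpa using congrArg (fun x => x - vb) this
  · rintro rfl
    refine ⟨fun z _ => by simp, by simp⟩
end
end
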